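/- Let T be a finite tree with n ≥ 2 vertices and m = n − 1 edges. Then (Σ_{uv ∈ E(T)} ε₃(u;T)·ε₃(v;T)) / m ≤ (Σ_{u ∈ V(T)} ε₃(u;T)²) / n, that is, F₂(T)/m(T) ≤ F₁(T)/n(T). -/

import Mathlib

open SimpleGraph Finset

variable {V : Type*}

/-- The Fermat distance of a vertex triple: minimum over all vertices σ of
    `d(σ,u) + d(σ,v) + d(σ,w)`. -/
noncomputable def fermatDist (G : SimpleGraph V) (u v w : V) : ℕ :=
  ⨅ σ : V, (G.dist σ u + G.dist σ v + G.dist σ w)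

/-- The Fermat eccentricity `ε₃(u;G)`: maximum Fermat distance of triples containing `u`. -/
noncomputable def fermatEcc [Fintype V] (G : SimpleGraph V) (u : V) : ℕ :=
  Finset.univ.sup fun p : V × V => fermatDist G u p.1 p.2

/-- The ordinary eccentricity `ε₂(u;G)`. -/
noncomputable def ecc2 [Fintype V] (G : SimpleGraph V) (u : V) : ℕ :=
  Finset.univ.sup fun v => G.dist u v

/-- The diameter of `G`. -/
noncomputable def gdiam [Fintype V] (G : SimpleGraph V) : ℕ :=
  Finset.univ.sup fun p : V × V => G.dist p.1 p.2

/-- A central vertex: one minimizing the ordinary eccentricity. -/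
def isCentral [Fintype V] (G : SimpleGraph V) (c : V) : Prop :=
  ∀ u : V, ecc2 G c ≤ ecc2 G u

/-- The number of edges of `G`. -/
noncomputable def numEdges [Fintype V] (G : SimpleGraph V) : ℕ :=
  letI := Classical.decEq V
  letI := Classical.decRel G.Adj
  G.edgeFinset.card

/-- The first Zagreb–Fermat eccentricity index `F₁(G) = Σ_u ε₃(u)²`. -/
noncomputable def F1 [Fintype V] (G : SimpleGraph V) : ℕ :=
  ∑ u : V, (fermatEcc G u) ^ 2

/-- The second Zagreb–Fermat eccentricity index `F₂(G) = Σ_{uv ∈ E} ε₃(u)·ε₃(v)`. -/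
noncomputable def F2 [Fintype V] (G : SimpleGraph V) : ℕ :=
  letI := Classical.decEq V
  letI := Classical.decRel G.Adj
  ∑ e ∈ G.edgeFinset,
    Sym2.lift ⟨fun u v => fermatEcc G u * fermatEcc G v, fun _ _ => mul_comm _ _⟩ e

/-- `u` lies in the subtree `T_{v_i}` hanging off the `i`-th vertex of the path `P`:
its geodesic to every vertex of `P` passes through `P.getVert i`. -/
def inSubtree (G : SimpleGraph V) {a b : V} (P : G.Walk a b) (i : ℕ) (u : V) : Prop :=
  ∀ j ≤ P.length, G.dist u (P.getVert j) = G.dist u (P.getVert i) + G.dist (P.getVert i) (P.getVert j)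

/-- `ℓ_i`: the height of the subtree `T_{v_i}`. -/
noncomputable def subtreeHeight [Fintype V] (G : SimpleGraph V) {a b : V} (P : G.Walk a b)
    (i : ℕ) : ℕ :=
  letI := Classical.decPred (inSubtree G P i)
  Finset.univ.sup fun u => if inSubtree G P i u then G.dist (P.getVert i) u else 0

/-!
In a tree the Fermat distance is half the perimeter, `2 F(u,v,w) = d(u,v) + d(u,w) + d(v,w)`,
since a minimizing vertex is a median of the triple. Consequently, for every edge `vc` some leaf
`ℓ` on the `c`-side of `vc` has `ε₃(ℓ) ≥ ε₃(v)`. Put `f = ε₃²`. By AM–GM on the edges,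
`2 F₂ ≤ ∑ deg(u) f(u) = 2 F₁ - ∑ (2 - deg u) f(u)`. Hanging the tree from any vertex `r` and
inducting over its branches, the leaf property gives `∑ (2 - deg u) f(u) ≥ 2 f(r)`. With `r` of
maximal `ε₃` this yields `F₂ ≤ F₁ - f(r) ≤ F₁ - F₁ / n`, i.e. `F₂ / (n - 1) ≤ F₁ / n`.
-/

namespace SimpleGraph

section Metric

variable {G : SimpleGraph V} {u w x t : V}

theorem Walk.dist_add_dist_of_mem_support {p : G.Walk u w} (hp : p.length = G.dist u w)
    (hx : x ∈ p.support) : G.dist u x + G.dist x w = G.dist u w := by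
  classical
  have hsplit : (p.takeUntil x hx).length + (p.dropUntil x hx).length = p.length := by
    rw [← Walk.length_append, p.take_spec hx]
  have := dist_le (p.takeUntil x hx)
  have := dist_le (p.dropUntil x hx)
  have : G.dist u w ≤ G.dist u x + G.dist x w :=
    (p.takeUntil x hx).reachable.dist_triangle_left w
  omega

theorem Connected.exists_adj_dist_add_one (hG : G.Connected) (h : u ≠ t) :
    ∃ w, G.Adj u w ∧ G.dist t w + 1 = G.dist t u := by
  obtain ⟨p, -, hp⟩ := hG.exists_path_of_dist u t
  obtain ⟨w, hadj, q, rfl⟩ := Walk.exists_eq_cons_of_ne h p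
  refine ⟨w, hadj, le_antisymm ?_ ?_⟩
  · simpa [dist_comm, ← hp] using dist_le q
  · exact (hG.dist_triangle (v := w)).trans_eq <| by rw [dist_eq_one_iff_adj.2 hadj.symm]

end Metric

namespace IsTree

variable {T : SimpleGraph V} {u v x t w₁ w₂ : V}

theorem eq_of_adj_of_dist_add_one (hT : T.IsTree) (h₁ : T.Adj u w₁) (h₂ : T.Adj u w₂)
    (e₁ : T.dist t w₁ + 1 = T.dist t u) (e₂ : T.dist t w₂ + 1 = T.dist t u) : w₁ = w₂ := by
  obtain ⟨q₁, -, hq₁⟩ := hT.connected.exists_path_of_dist t w₁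
  obtain ⟨q₂, -, hq₂⟩ := hT.connected.exists_path_of_dist t w₂
  have hp₁ := (q₁.concat h₁.symm).isPath_of_length_eq_dist (by simp [hq₁, e₁])
  have hp₂ := (q₂.concat h₂.symm).isPath_of_length_eq_dist (by simp [hq₂, e₂])
  simpa using congrArg Walk.penultimate ((hT.existsUnique_path t u).unique hp₁ hp₂)

variable [Fintype V] [DecidableRel T.Adj]

theorem degree_eq_one_of_forall_adj_dist_lt (hT : T.IsTree) (hu : u ≠ t)
    (h : ∀ w, T.Adj u w → T.dist t w < T.dist t u) : T.degree u = 1 := by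
  obtain ⟨w₀, hadj₀, hw₀⟩ := hT.connected.exists_adj_dist_add_one hu
  rw [← card_neighborFinset_eq_degree, Finset.card_eq_one]
  refine ⟨w₀, Finset.ext fun w => ⟨fun hw => ?_, fun hw => ?_⟩⟩
  · rw [mem_neighborFinset] at hw
    have := h w hw
    have := hT.dist_eq_dist_add_one_of_adj t hw
    exact Finset.mem_singleton.2 (hT.eq_of_adj_of_dist_add_one hw hadj₀ (by omega) hw₀)
  · rw [Finset.mem_singleton.1 hw, mem_neighborFinset]
    exact hadj₀

theorem exists_degree_eq_one_dist_eq_add (hT : T.IsTree) (hx : x ≠ v) :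
    ∃ ℓ, T.degree ℓ = 1 ∧ T.dist v ℓ = T.dist v x + T.dist x ℓ := by
  obtain ⟨ℓ, hℓ, hmax⟩ := Finset.exists_max_image
    ({u | T.dist v u = T.dist v x + T.dist x u} : Finset V) (T.dist v) ⟨x, by simp⟩
  simp only [Finset.mem_filter, Finset.mem_univ, true_and] at hℓ hmax
  have hvx := hT.connected.pos_dist_of_ne hx.symm
  refine ⟨ℓ, hT.degree_eq_one_of_forall_adj_dist_lt (t := v) ?_ fun w hw => ?_, hℓ⟩
  · rintro rfl
    rw [dist_self] at hℓ
    omega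
  · have h₁ : T.dist v w ≤ T.dist v x + T.dist x w := hT.connected.dist_triangle
    have h₂ : T.dist x w ≤ T.dist x ℓ + T.dist ℓ w := hT.connected.dist_triangle
    have h₃ := dist_eq_one_iff_adj.2 hw
    have := hT.dist_eq_dist_add_one_of_adj v hw
    have := hmax w
    omega

end IsTree

/-- For adjacent `v c` of a tree, the vertex set of the component of `c` in `T - vc`. -/
noncomputable def branch [Fintype V] (G : SimpleGraph V) (v c : V) : Finset V :=
  {u | G.dist u v = G.dist u c + 1}

variable [Fintype V] {T : SimpleGraph V} {u v c c' z a ℓ : V}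

theorem mem_branch : u ∈ T.branch v c ↔ T.dist u v = T.dist u c + 1 := by
  simp [branch]

theorem self_mem_branch (hvc : T.Adj v c) : c ∈ T.branch v c := by
  simp [mem_branch, dist_eq_one_iff_adj.2 hvc.symm]

namespace IsTree

theorem notMem_branch_iff (hT : T.IsTree) (hvc : T.Adj v c) :
    z ∉ T.branch v c ↔ T.dist z c = T.dist z v + 1 := by
  have := hT.dist_eq_dist_add_one_of_adj z hvc
  rw [mem_branch]
  omega

theorem mem_branch_of_dist_eq_add (hT : T.IsTree) (hvc : T.Adj v c) (ha : a ∈ T.branch v c)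
    (h : T.dist v ℓ = T.dist v a + T.dist a ℓ) : ℓ ∈ T.branch v c := by
  rw [mem_branch] at ha ⊢
  have : T.dist ℓ c ≤ T.dist ℓ a + T.dist a c := hT.connected.dist_triangle
  have := hT.dist_eq_dist_add_one_of_adj ℓ hvc
  have := T.dist_comm (u := v) (v := ℓ)
  have := T.dist_comm (u := v) (v := a)
  have := T.dist_comm (u := a) (v := ℓ)
  omega

/-- A walk from `c` to `v` avoiding the bridge `vc` is assembled if a geodesic from `u` to `z`
misses `v`. -/
theorem dist_eq_add_of_mem_branch_of_notMem_branch (hT : T.IsTree) (hvc : T.Adj v c)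
    (hu : u ∈ T.branch v c) (hz : z ∉ T.branch v c) :
    T.dist u z = T.dist u v + T.dist v z := by
  rw [mem_branch] at hu
  rw [hT.notMem_branch_iff hvc] at hz
  obtain ⟨q, -, hq⟩ := hT.connected.exists_path_of_dist u z
  by_cases hv : v ∈ q.support
  · exact (q.dist_add_dist_of_mem_support hq hv).symm
  exfalso
  obtain ⟨a, -, ha⟩ := hT.connected.exists_path_of_dist c u
  obtain ⟨b, -, hb⟩ := hT.connected.exists_path_of_dist z v
  have hva : v ∉ a.support := fun h => by
    have hsplit := a.dist_add_dist_of_mem_support ha h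
    rw [dist_eq_one_iff_adj.2 hvc.symm] at hsplit
    have := T.dist_comm (u := c) (v := u)
    have := T.dist_comm (u := v) (v := u)
    omega
  have hcb : c ∉ b.support := fun h => by
    have := b.dist_add_dist_of_mem_support hb h
    rw [dist_eq_one_iff_adj.2 hvc.symm] at this
    omega
  have hbridge := isBridge_iff_forall_walk_mem_edges.1
    (isAcyclic_iff_forall_adj_isBridge.1 hT.isAcyclic hvc.symm) (a.append (q.append b))
  simp only [Walk.edges_append, List.mem_append] at hbridge
  rcases hbridge with h | h | h
  · exact hva (a.snd_mem_support_of_mem_edges h)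
  · exact hv (q.snd_mem_support_of_mem_edges h)
  · exact hcb (b.fst_mem_support_of_mem_edges h)

theorem dist_eq_add_of_forall_notMem_branch (hT : T.IsTree) {x y σ : V}
    (h : ∀ c, T.Adj σ c → x ∈ T.branch σ c → y ∉ T.branch σ c) :
    T.dist x y = T.dist x σ + T.dist σ y := by
  by_cases hxσ : x = σ
  · simp [hxσ]
  obtain ⟨c, hσc, hc⟩ := hT.connected.exists_adj_dist_add_one (t := x) (Ne.symm hxσ)
  have hx : x ∈ T.branch σ c := mem_branch.2 hc.symm
  exact hT.dist_eq_add_of_mem_branch_of_notMem_branch hσc hx (h c hσc hx)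

theorem pairwiseDisjoint_branch [DecidableRel T.Adj] (hT : T.IsTree) (v : V) :
    (T.neighborFinset v : Set V).PairwiseDisjoint (T.branch v) := by
  intro c₁ h₁ c₂ h₂ hne
  refine Finset.disjoint_left.2 fun u hu₁ hu₂ => hne ?_
  rw [Finset.mem_coe, mem_neighborFinset] at h₁ h₂
  rw [mem_branch] at hu₁ hu₂
  exact hT.eq_of_adj_of_dist_add_one h₁ h₂ hu₁.symm hu₂.symm

variable [DecidableEq V] [DecidableRel T.Adj]

theorem biUnion_branch (hT : T.IsTree) (r : V) :
    (T.neighborFinset r).biUnion (T.branch r) = Finset.univ.erase r := by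
  ext u
  simp only [Finset.mem_biUnion, mem_neighborFinset, Finset.mem_erase, Finset.mem_univ,
    and_true, mem_branch]
  constructor
  · rintro ⟨c, -, hu⟩ rfl
    simp at hu
  · intro hu
    obtain ⟨c, hc, h⟩ := hT.connected.exists_adj_dist_add_one (Ne.symm hu)
    exact ⟨c, hc, h.symm⟩

theorem biUnion_branch_erase (hT : T.IsTree) (hvc : T.Adj v c) :
    ((T.neighborFinset c).erase v).biUnion (T.branch c) = (T.branch v c).erase c := by
  ext u
  simp only [Finset.mem_biUnion, Finset.mem_erase, mem_neighborFinset, mem_branch]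
  constructor
  · rintro ⟨c', ⟨hc'v, hcc'⟩, hu⟩
    refine ⟨by rintro rfl; simp at hu, ?_⟩
    refine (hT.dist_eq_dist_add_one_of_adj u hvc).resolve_right fun h => hc'v ?_
    exact (hT.eq_of_adj_of_dist_add_one hvc.symm hcc' h.symm hu.symm).symm
  · rintro ⟨huc, hu⟩
    obtain ⟨c', hcc', h⟩ := hT.connected.exists_adj_dist_add_one (Ne.symm huc)
    exact ⟨c', ⟨by rintro rfl; omega, hcc'⟩, h.symm⟩

theorem card_branch_lt (hT : T.IsTree) (hvc : T.Adj v c)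
    (hc' : c' ∈ (T.neighborFinset c).erase v) : #(T.branch c c') < #(T.branch v c) := by
  refine Finset.card_lt_card (Finset.ssubset_of_subset_of_ssubset ?_
    (Finset.erase_ssubset (self_mem_branch hvc)))
  rw [← hT.biUnion_branch_erase hvc]
  exact Finset.subset_biUnion_of_mem (T.branch c) hc'

theorem sum_eq_add_sum_branch {M : Type*} [AddCommMonoid M] (hT : T.IsTree) (g : V → M)
    (r : V) : ∑ u, g u = g r + ∑ c ∈ T.neighborFinset r, ∑ u ∈ T.branch r c, g u := by
  rw [← Finset.sum_biUnion (hT.pairwiseDisjoint_branch r), hT.biUnion_branch,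
    Finset.add_sum_erase _ _ (Finset.mem_univ r)]

theorem sum_branch_eq {M : Type*} [AddCommMonoid M] (hT : T.IsTree) (g : V → M)
    (hvc : T.Adj v c) : ∑ u ∈ T.branch v c, g u =
      g c + ∑ c' ∈ (T.neighborFinset c).erase v, ∑ u ∈ T.branch c c', g u := by
  rw [← Finset.sum_biUnion ((hT.pairwiseDisjoint_branch c).subset (by simp)),
    hT.biUnion_branch_erase hvc, Finset.add_sum_erase _ _ (self_mem_branch hvc)]

variable {R : Type*} [CommRing R] [LinearOrder R] [IsStrictOrderedRing R]

/-- Rooting the branch at `c`, the coefficient `2 - deg u` is `1 - (number of children of u)`;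
each of the `deg c - 2` surplus children of `c` pays for its `f c` with a leaf below it. -/
theorem le_sum_branch_two_sub_degree_mul (hT : T.IsTree) {f : V → R}
    (hf : ∀ v c, T.Adj v c → ∃ ℓ ∈ T.branch v c, T.degree ℓ = 1 ∧ f v ≤ f ℓ)
    (hvc : T.Adj v c) (hℓ : ℓ ∈ T.branch v c) (hℓ₁ : T.degree ℓ = 1) :
    f ℓ ≤ ∑ u ∈ T.branch v c, (2 - T.degree u : R) * f u := by
  induction hn : #(T.branch v c) using Nat.strong_induction_on generalizing v c ℓ with
  | _ n ih =>
  rw [hT.sum_branch_eq _ hvc]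
  set A := (T.neighborFinset c).erase v
  have hA : #A + 1 = T.degree c := by
    rw [Finset.card_erase_add_one (by simpa using hvc.symm), card_neighborFinset_eq_degree]
  have hadj : ∀ c' ∈ A, T.Adj c c' := fun c' hc' => by
    simpa using Finset.mem_of_mem_erase hc'
  have hsub : ∀ c' ∈ A, ∀ ℓ' ∈ T.branch c c', T.degree ℓ' = 1 →
      f ℓ' ≤ ∑ u ∈ T.branch c c', (2 - T.degree u : R) * f u := fun c' hc' ℓ' hℓ' hℓ'₁ =>
    ih _ (hn ▸ hT.card_branch_lt hvc hc') (hadj c' hc') hℓ' hℓ'₁ rfl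
  have hsub_c : ∀ c' ∈ A, f c ≤ ∑ u ∈ T.branch c c', (2 - T.degree u : R) * f u := by
    intro c' hc'
    obtain ⟨ℓ', hℓ', hℓ'₁, hcℓ'⟩ := hf c c' (hadj c' hc')
    exact hcℓ'.trans (hsub c' hc' ℓ' hℓ' hℓ'₁)
  by_cases hℓc : ℓ = c
  · rw [← hℓc, hℓ₁] at hA
    rw [Finset.card_eq_zero.1 (by omega : #A = 0), ← hℓc, hℓ₁]
    norm_num
  obtain ⟨c₀, hc₀, hℓc₀⟩ := Finset.mem_biUnion.1
    ((hT.biUnion_branch_erase hvc).symm ▸ Finset.mem_erase.2 ⟨hℓc, hℓ⟩)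
  have hrest := Finset.card_nsmul_le_sum (A.erase c₀) _ _ fun c' hc' =>
    hsub_c c' (Finset.mem_of_mem_erase hc')
  have hcard : (#(A.erase c₀) : R) = T.degree c - 2 := by
    rw [← hA, ← Finset.card_erase_add_one hc₀]
    push_cast
    ring
  rw [← Finset.add_sum_erase _ _ hc₀]
  rw [nsmul_eq_mul, hcard] at hrest
  linarith [hsub c₀ hc₀ ℓ hℓc₀ hℓ₁]

theorem two_mul_le_sum_two_sub_degree_mul (hT : T.IsTree) {f : V → R}
    (hf : ∀ v c, T.Adj v c → ∃ ℓ ∈ T.branch v c, T.degree ℓ = 1 ∧ f v ≤ f ℓ) (r : V) :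
    2 * f r ≤ ∑ u, (2 - T.degree u : R) * f u := by
  have hbranch : ∀ c ∈ T.neighborFinset r,
      f r ≤ ∑ u ∈ T.branch r c, (2 - T.degree u : R) * f u := by
    intro c hc
    obtain ⟨ℓ, hℓ, hℓ₁, hrℓ⟩ := hf r c (by simpa using hc)
    exact hrℓ.trans (hT.le_sum_branch_two_sub_degree_mul hf (by simpa using hc) hℓ hℓ₁)
  have := Finset.card_nsmul_le_sum _ _ _ hbranch
  rw [nsmul_eq_mul, card_neighborFinset_eq_degree] at this
  rw [hT.sum_eq_add_sum_branch _ r]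
  linarith

end IsTree

section Darts

variable [DecidableEq V] (G : SimpleGraph V) [DecidableRel G.Adj]

theorem sum_darts_edge {R : Type*} [CommSemiring R] (h : Sym2 V → R) :
    ∑ d : G.Dart, h d.edge = 2 * ∑ e ∈ G.edgeFinset, h e := by
  rw [← Finset.sum_fiberwise_of_maps_to (g := Dart.edge) (t := G.edgeFinset)
    (fun d _ => mem_edgeFinset.2 d.edge_mem), Finset.mul_sum]
  refine Finset.sum_congr rfl fun e he => ?_
  rw [Finset.sum_congr rfl fun d hd => congrArg h (Finset.mem_filter.1 hd).2, Finset.sum_const,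
    G.dart_edge_fiber_card e (mem_edgeFinset.1 he), nsmul_eq_mul, Nat.cast_ofNat]

theorem sum_darts_fst {R : Type*} [CommSemiring R] (g : V → R) :
    ∑ d : G.Dart, g d.fst = ∑ v, G.degree v * g v := by
  rw [← Finset.sum_fiberwise_of_maps_to (g := fun d : G.Dart => d.fst) (t := Finset.univ)
    (fun d _ => Finset.mem_univ _)]
  refine Finset.sum_congr rfl fun v _ => ?_
  rw [Finset.sum_congr rfl fun d hd => congrArg g (Finset.mem_filter.1 hd).2, Finset.sum_const,
    G.dart_fst_fiber_card_eq_degree v, nsmul_eq_mul]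

theorem two_mul_sum_edgeFinset_lift_mul_le {R : Type*} [CommRing R] [LinearOrder R]
    [IsStrictOrderedRing R] (g : V → R) :
    2 * ∑ e ∈ G.edgeFinset, Sym2.lift ⟨fun u v => g u * g v, fun _ _ => mul_comm _ _⟩ e ≤
      ∑ v, G.degree v * g v ^ 2 := by
  rw [← sum_darts_edge, ← sum_darts_fst]
  have hsymm : ∑ d : G.Dart, g d.snd ^ 2 = ∑ d : G.Dart, g d.fst ^ 2 :=
    Fintype.sum_equiv (Equiv.mk Dart.symm Dart.symm Dart.symm_symm Dart.symm_symm) _ _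
      fun _ => rfl
  have hamgm : ∀ d : G.Dart, 2 * (g d.fst * g d.snd) ≤ g d.fst ^ 2 + g d.snd ^ 2 :=
    fun d => two_mul_le_add_sq _ _ |>.trans_eq' (mul_assoc ..)
  have := Finset.sum_le_sum fun d (_ : d ∈ Finset.univ) => hamgm d
  rw [← Finset.mul_sum, Finset.sum_add_distrib, hsymm] at this
  simp only [Dart.edge, Sym2.lift_mk]
  linarith

end Darts

end SimpleGraph

open SimpleGraph

theorem exists_fermatDist_eq_and_forall_le (G : SimpleGraph V) (u v w : V) :
    ∃ σ, fermatDist G u v w = G.dist σ u + G.dist σ v + G.dist σ w ∧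
      ∀ σ', G.dist σ u + G.dist σ v + G.dist σ w ≤ G.dist σ' u + G.dist σ' v + G.dist σ' w := by
  obtain ⟨σ, hσ⟩ := Nat.sInf_mem (Set.range_nonempty_iff_nonempty.2 ⟨u⟩ :
    (Set.range fun σ => G.dist σ u + G.dist σ v + G.dist σ w).Nonempty)
  exact ⟨σ, hσ.symm, fun σ' => hσ.le.trans (Nat.sInf_le ⟨σ', rfl⟩)⟩

theorem fermatDist_le_fermatEcc [Fintype V] (G : SimpleGraph V) (u v w : V) :
    fermatDist G u v w ≤ fermatEcc G u :=
  Finset.le_sup (f := fun p : V × V => fermatDist G u p.1 p.2) (Finset.mem_univ (v, w))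

theorem exists_fermatEcc_eq [Fintype V] (G : SimpleGraph V) (u : V) :
    ∃ v w, fermatEcc G u = fermatDist G u v w := by
  obtain ⟨p, -, hp⟩ := Finset.exists_mem_eq_sup (Finset.univ : Finset (V × V))
    ⟨(u, u), Finset.mem_univ _⟩ fun p => fermatDist G u p.1 p.2
  exact ⟨p.1, p.2, hp⟩

theorem F1_le_card_mul_sq [Fintype V] (G : SimpleGraph V) {r : V}
    (hr : ∀ u, fermatEcc G u ≤ fermatEcc G r) : F1 G ≤ Fintype.card V * fermatEcc G r ^ 2 := by
  have := Finset.sum_le_card_nsmul Finset.univ (fun u => fermatEcc G u ^ 2) (fermatEcc G r ^ 2)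
    fun u _ => Nat.pow_le_pow_left (hr u) 2
  rwa [Finset.card_univ, smul_eq_mul] at this

namespace SimpleGraph.IsTree

variable [Fintype V] {T : SimpleGraph V}

/-- A minimizing `σ` is a median: were two of the three vertices in a common branch at `σ`,
stepping into that branch would decrease the sum. -/
theorem two_mul_fermatDist (hT : T.IsTree) (x y w : V) :
    2 * fermatDist T x y w = T.dist x y + T.dist x w + T.dist y w := by
  obtain ⟨σ, hF, hmin⟩ := exists_fermatDist_eq_and_forall_le T x y w
  have hstep : ∀ c t, T.Adj σ c → T.dist c t ≤ T.dist σ t + 1 := fun c t hσc =>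
    (hT.connected.dist_triangle (v := σ)).trans_eq <| by
      rw [dist_comm, dist_eq_one_iff_adj.2 hσc, add_comm]
  have hin : ∀ c t, t ∈ T.branch σ c → T.dist c t + 1 = T.dist σ t := fun c t ht => by
    rw [mem_branch, dist_comm (u := t), dist_comm (u := t)] at ht
    exact ht.symm
  have hxy : ∀ c, T.Adj σ c → x ∈ T.branch σ c → y ∉ T.branch σ c := fun c hσc hx hy => by
    linarith [hmin c, hin c x hx, hin c y hy, hstep c w hσc]
  have hxw : ∀ c, T.Adj σ c → x ∈ T.branch σ c → w ∉ T.branch σ c := fun c hσc hx hw => by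
    linarith [hmin c, hin c x hx, hin c w hw, hstep c y hσc]
  have hyw : ∀ c, T.Adj σ c → y ∈ T.branch σ c → w ∉ T.branch σ c := fun c hσc hy hw => by
    linarith [hmin c, hin c y hy, hin c w hw, hstep c x hσc]
  have := hT.dist_eq_add_of_forall_notMem_branch hxy
  have := hT.dist_eq_add_of_forall_notMem_branch hxw
  have := hT.dist_eq_add_of_forall_notMem_branch hyw
  have := T.dist_comm (u := x) (v := σ)
  have := T.dist_comm (u := y) (v := σ)
  omega

theorem dist_add_dist_add_dist_le_two_mul_fermatEcc (hT : T.IsTree) (u a b : V) :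
    T.dist u a + T.dist u b + T.dist a b ≤ 2 * fermatEcc T u :=
  (hT.two_mul_fermatDist u a b).symm.trans_le <|
    Nat.mul_le_mul_left 2 (fermatDist_le_fermatEcc T u a b)

/-- Pushing `v` out to a leaf of a branch only enlarges the subtree it spans with the two
vertices realizing `ε₃(v)`. -/
theorem exists_mem_branch_degree_eq_one_fermatEcc_le [DecidableRel T.Adj] (hT : T.IsTree)
    {v c : V} (hvc : T.Adj v c) :
    ∃ ℓ ∈ T.branch v c, T.degree ℓ = 1 ∧ fermatEcc T v ≤ fermatEcc T ℓ := by
  obtain ⟨x, y, hxy⟩ := exists_fermatEcc_eq T v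
  have hε := hxy ▸ hT.two_mul_fermatDist v x y
  have hv : v ∉ T.branch v c := by simp [mem_branch]
  have hbeyond : ∀ a ∈ T.branch v c, ∃ ℓ ∈ T.branch v c, T.degree ℓ = 1 ∧
      T.dist v ℓ = T.dist v a + T.dist a ℓ := fun a ha => by
    obtain ⟨ℓ, hℓ₁, hℓ⟩ := hT.exists_degree_eq_one_dist_eq_add (ne_of_mem_of_not_mem ha hv)
    exact ⟨ℓ, hT.mem_branch_of_dist_eq_add hvc ha hℓ, hℓ₁, hℓ⟩
  have key : ∀ a b, 2 * fermatEcc T v = T.dist v a + T.dist v b + T.dist a b →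
      a ∈ T.branch v c → ∃ ℓ ∈ T.branch v c, T.degree ℓ = 1 ∧ fermatEcc T v ≤ fermatEcc T ℓ := by
    intro a b hab ha
    obtain ⟨ℓ, hℓ, hℓ₁, hvℓ⟩ := hbeyond a ha
    refine ⟨ℓ, hℓ, hℓ₁, ?_⟩
    have := hT.dist_add_dist_add_dist_le_two_mul_fermatEcc ℓ v b
    have : T.dist a b ≤ T.dist a ℓ + T.dist ℓ b := hT.connected.dist_triangle
    have := T.dist_comm (u := v) (v := ℓ)
    omega
  by_cases hx : x ∈ T.branch v c
  · exact key x y hε hx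
  by_cases hy : y ∈ T.branch v c
  · have := T.dist_comm (u := x) (v := y)
    exact key y x (by omega) hy
  obtain ⟨ℓ, hℓ, hℓ₁, -⟩ := hbeyond c (self_mem_branch hvc)
  refine ⟨ℓ, hℓ, hℓ₁, ?_⟩
  have := hT.dist_add_dist_add_dist_le_two_mul_fermatEcc ℓ x y
  have := hT.dist_eq_add_of_mem_branch_of_notMem_branch hvc hℓ hx
  have := hT.dist_eq_add_of_mem_branch_of_notMem_branch hvc hℓ hy
  omega

theorem F2_add_sq_fermatEcc_le_F1 (hT : T.IsTree) (r : V) :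
    (F2 T : ℚ) + (fermatEcc T r : ℚ) ^ 2 ≤ F1 T := by
  classical
  set ε : V → ℚ := fun u => fermatEcc T u
  have hF1 : (F1 T : ℚ) = ∑ u, ε u ^ 2 := by simp [F1, ε]
  have hF2 : (F2 T : ℚ) =
      ∑ e ∈ T.edgeFinset, Sym2.lift ⟨fun u v => ε u * ε v, fun _ _ => mul_comm _ _⟩ e := by
    unfold F2
    rw [Nat.cast_sum]
    refine Finset.sum_congr rfl fun e _ => ?_
    induction e using Sym2.ind
    simp [ε]
  have hedges := T.two_mul_sum_edgeFinset_lift_mul_le ε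
  have hleaves : 2 * ε r ^ 2 ≤ ∑ u, (2 - T.degree u : ℚ) * ε u ^ 2 :=
    hT.two_mul_le_sum_two_sub_degree_mul (f := fun u => ε u ^ 2) (fun v c hvc => by
      obtain ⟨ℓ, hℓ, hℓ₁, hvℓ⟩ := hT.exists_mem_branch_degree_eq_one_fermatEcc_le hvc
      exact ⟨ℓ, hℓ, hℓ₁, by simp only [ε]; gcongr⟩) r
  have hsum : ∑ u, T.degree u * ε u ^ 2 + ∑ u, (2 - T.degree u : ℚ) * ε u ^ 2 =
      2 * ∑ u, ε u ^ 2 := by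
    rw [← Finset.sum_add_distrib, Finset.mul_sum]
    exact Finset.sum_congr rfl fun u _ => by ring
  linarith

end SimpleGraph.IsTree

/-- For every finite tree `T` with `n ≥ 2` vertices and `m = n - 1` edges,
`F₂(T)/m ≤ F₁(T)/n`. -/
theorem avg_F2_le_avg_F1_of_tree [Fintype V] (T : SimpleGraph V) (hT : T.IsTree)
    (hn : 2 ≤ Fintype.card V) (hm : numEdges T = Fintype.card V - 1) :
    (F2 T : ℚ) / (numEdges T : ℚ) ≤ (F1 T : ℚ) / (Fintype.card V : ℚ) := by
  have : Nonempty V := Fintype.card_pos_iff.1 (by omega)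
  obtain ⟨r, -, hr⟩ := Finset.exists_max_image Finset.univ (fermatEcc T) Finset.univ_nonempty
  have hF2 := hT.F2_add_sq_fermatEcc_le_F1 r
  have hF1 : (F1 T : ℚ) ≤ Fintype.card V * (fermatEcc T r : ℚ) ^ 2 := by
    exact_mod_cast F1_le_card_mul_sq T fun u => hr u (Finset.mem_univ u)
  have hm' : (numEdges T : ℚ) = Fintype.card V - 1 := by
    rw [hm, Nat.cast_sub (by omega), Nat.cast_one]
  have hn' : (2 : ℚ) ≤ Fintype.card V := by exact_mod_cast hn
  rw [div_le_div_iff₀ (by linarith) (by linarith), hm']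
  nlinarith
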